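/- Let A be a unital Banach algebra, A₀, B ∈ A, and L(x,t) = exp(A₀ x + A₀³ t) B. On the set where I + L is invertible, Q̃ := (I + L)⁻¹ A₀ (I - L) satisfies Q̃_x = -(I + L)⁻¹ A₀ (I + L)⁻¹ (A₀ L + L A₀). -/

import Mathlib

variable {A : Type*} [NormedRing A] [NormedAlgebra ℝ A] [CompleteSpace A]

/-- partial derivative in the first (space) variable -/
noncomputable def px (Q : ℝ × ℝ → A) : ℝ × ℝ → A := fun p => deriv (fun x => Q (x, p.2)) p.1

/-- partial derivative in the second (time) variable -/
noncomputable def pt (Q : ℝ × ℝ → A) : ℝ × ℝ → A := fun p => deriv (fun t => Q (p.1, t)) p.2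

open NormedSpace Ring

theorem Commute.ringInverse_right {M₀ : Type*} [MonoidWithZero M₀] {a b : M₀} (h : Commute a b) :
    Commute a b⁻¹ʳ := by
  by_cases hb : IsUnit b
  · obtain ⟨u, rfl⟩ := hb
    rw [Ring.inverse_unit]
    exact h.units_inv_right
  · rw [Ring.inverse_non_unit b hb]
    exact Commute.zero_right a

theorem HasDerivAt.ringInverse {𝕜 R : Type*} [NontriviallyNormedField 𝕜] [NormedRing R]
    [NormedAlgebra 𝕜 R] [HasSummableGeomSeries R] {f : 𝕜 → R} {f' : R} {x : 𝕜}
    (hf : HasDerivAt f f' x) (hx : IsUnit (f x)) :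
    HasDerivAt (fun y => (f y)⁻¹ʳ) (-((f x)⁻¹ʳ * f' * (f x)⁻¹ʳ)) x := by
  have hinv : (↑hx.unit⁻¹ : R) = (f x)⁻¹ʳ := by rw [← Ring.inverse_unit, hx.unit_spec]
  have h := hasFDerivAt_ringInverse (𝕜 := 𝕜) hx.unit
  rw [hinv, hx.unit_spec] at h
  exact h.comp_hasDerivAt x hf

theorem hasDerivAt_exp_smul_add_mul {𝕂 𝔸 : Type*} [RCLike 𝕂] [NormedRing 𝔸] [NormedAlgebra 𝕂 𝔸]
    [CompleteSpace 𝔸] {a c : 𝔸} (hac : Commute a c) (b : 𝔸) (x : 𝕂) :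
    HasDerivAt (fun y : 𝕂 => exp (y • a + c) * b) (a * (exp (x • a + c) * b)) x := by
  let +nondep : NormedAlgebra ℚ 𝔸 := .restrictScalars ℚ 𝕂 𝔸
  have hsplit (y : 𝕂) : exp (y • a + c) * b = exp (y • a) * (exp c * b) := by
    rw [exp_add_of_commute (hac.smul_left y), mul_assoc]
  simp only [hsplit]
  rw [← mul_assoc]
  exact (hasDerivAt_exp_smul_const' a x).mul_const _

/-- The product rule for `(1 + l)⁻¹ʳ * a * (1 - l)` along `l' = a * l`; it collapses because `l`
commutes with `(1 + l)⁻¹ʳ`. -/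
theorem inverse_one_add_product_rule_eq {R : Type*} [Ring R] {a l : R} (h : IsUnit (1 + l)) :
    -((1 + l)⁻¹ʳ * (a * l) * (1 + l)⁻¹ʳ) * a * (1 - l) + (1 + l)⁻¹ʳ * a * -(a * l) =
      -((1 + l)⁻¹ʳ * a * (1 + l)⁻¹ʳ * (a * l + l * a)) := by
  set v := (1 + l)⁻¹ʳ
  have hv : v * (1 + l) = 1 := Ring.inverse_mul_cancel _ h
  have hlv : l * v = v * l := ((Commute.one_right l).add_right (Commute.refl l)).ringInverse_right.eq
  calc _ = -(v * a * (l * v) * a * (1 - l)) - v * a * 1 * (a * l) := by noncomm_ring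
    _ = -(v * a * (v * l) * a * (1 - l)) - v * a * (v * (1 + l)) * (a * l) := by rw [hlv, hv]
    _ = _ := by noncomm_ring

theorem HasDerivAt.inverse_one_add_mul_mul_one_sub {𝕜 R : Type*} [NontriviallyNormedField 𝕜]
    [NormedRing R] [NormedAlgebra 𝕜 R] [HasSummableGeomSeries R] {g : 𝕜 → R} {a : R} {x : 𝕜}
    (hg : HasDerivAt g (a * g x) x) (hx : IsUnit (1 + g x)) :
    HasDerivAt (fun y => (1 + g y)⁻¹ʳ * a * (1 - g y))
      (-((1 + g x)⁻¹ʳ * a * (1 + g x)⁻¹ʳ * (a * g x + g x * a))) x := by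
  rw [← inverse_one_add_product_rule_eq hx]
  exact (((hg.const_add 1).ringInverse hx).mul_const a).mul (hg.const_sub 1)

theorem stmt_12 (A₀ B : A)
    (L : ℝ × ℝ → A) (hL : L = fun p : ℝ × ℝ => NormedSpace.exp (p.1 • A₀ + p.2 • A₀ ^ 3) * B)
    (Qt : ℝ × ℝ → A) (hQt : Qt = fun p => Ring.inverse (1 + L p) * A₀ * (1 - L p)) :
    ∀ p : ℝ × ℝ, IsUnit (1 + L p) →
      px Qt p = -(Ring.inverse (1 + L p) * A₀ * Ring.inverse (1 + L p) * (A₀ * L p + L p * A₀)) := by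
  rintro ⟨x, t⟩ hx
  have hLx : HasDerivAt (fun y => L (y, t)) (A₀ * L (x, t)) x := by
    subst hL
    exact hasDerivAt_exp_smul_add_mul (((Commute.refl A₀).pow_right 3).smul_right t) B x
  subst hQt
  exact (hLx.inverse_one_add_mul_mul_one_sub hx).deriv
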